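/- Let k be a field of characteristic 2 with algebraic closure k̄, and let a ∈ k̄ satisfy a ∉ k and a² ∈ k. Let k' = k(a) ⊆ k̄, and let μ : k̄ ⊗_k k' → k̄ be the k-algebra homomorphism induced by the inclusion k̄ → k̄ and the inclusion k' → k̄ (so μ(c ⊗ d) = c·d). Then for all x, y ∈ k̄ ⊗_k k' satisfying x² + (1 ⊗ a)·y² = 1, one has μ(x) = 1 and μ(y) = 0. -/

import Mathlib

/-!
In characteristic 2 squaring is additive, and every element of `k' = k(a)` squares into `k`
because `a` does. Hence every square in `k̄ ⊗[k] k'` lies in `k̄ ⊗ 1`, so the hypothesis reads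
`u ⊗ 1 + v ⊗ a = 1 ⊗ 1` with `x² = u ⊗ 1`, `y² = v ⊗ 1`. As `1, a` are `k`-linearly independent,
`u = 1` and `v = 0`; applying `μ` gives `μ(x)² = 1` and `μ(y)² = 0`, and squaring is injective
on `k̄`.
-/

open TensorProduct IntermediateField

theorem linearIndependent_pair_one_of_notMem_range_algebraMap {K B : Type*} [Field K] [Ring B]
    [Nontrivial B] [Algebra K B] {b : B} (hb : b ∉ Set.range (algebraMap K B)) :
    LinearIndependent K ![1, b] :=
  (LinearIndependent.pair_iff' one_ne_zero).mpr fun c hc =>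
    hb ⟨c, by rwa [Algebra.algebraMap_eq_smul_one]⟩

theorem pow_mem_range_algebraMap_of_adjoin_simple {F E : Type*} [Field F] [Field E] [Algebra F E]
    (p : ℕ) [ExpChar E p] {α : E} (hα : α ^ p ∈ Set.range (algebraMap F E)) (x : F⟮α⟯) :
    x ^ p ∈ Set.range (algebraMap F F⟮α⟯) := by
  let L : IntermediateField F E :=
    (Subfield.comap (frobenius E p) (algebraMap F E).fieldRange).toIntermediateField
      fun r => ⟨r ^ p, by simp [frobenius_def]⟩
  have hle : F⟮α⟯ ≤ L := adjoin_simple_le_iff.mpr hα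
  obtain ⟨r, hr⟩ := hle x.2
  exact ⟨r, Subtype.ext (by simpa [frobenius_def] using hr)⟩

theorem exists_pow_eq_tmul_one {R A B : Type*} [CommSemiring R] [CommSemiring A] [CommSemiring B]
    [Algebra R A] [Algebra R B] (p : ℕ) [ExpChar (A ⊗[R] B) p]
    (hB : ∀ b : B, b ^ p ∈ Set.range (algebraMap R B)) (z : A ⊗[R] B) :
    ∃ a : A, z ^ p = a ⊗ₜ 1 := by
  induction z using TensorProduct.induction_on with
  | zero => exact ⟨0, by simp [zero_pow (expChar_pos (A ⊗[R] B) p).ne']⟩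
  | tmul a b =>
    obtain ⟨r, hr⟩ := hB b
    exact ⟨r • a ^ p, by
      rw [Algebra.TensorProduct.tmul_pow, ← hr, Algebra.algebraMap_eq_smul_one, tmul_smul,
        smul_tmul']⟩
  | add z w hz hw =>
    obtain ⟨a, ha⟩ := hz
    obtain ⟨b, hb⟩ := hw
    exact ⟨a + b, by rw [add_pow_expChar, ha, hb, add_tmul]⟩

theorem TensorProduct.eq_of_tmul_one_add_tmul_eq {K S B : Type*} [Field K] [CommRing S]
    [Algebra K S] [Ring B] [Nontrivial B] [Algebra K B] {b : B}
    (hb : b ∉ Set.range (algebraMap K B)) {u v u' v' : S}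
    (h : u ⊗ₜ[K] 1 + v ⊗ₜ b = u' ⊗ₜ 1 + v' ⊗ₜ b) : u = u' ∧ v = v' := by
  have hli : LinearIndependent S ![(1 : S) ⊗ₜ[K] (1 : B), 1 ⊗ₜ b] := by
    convert Module.Flat.linearIndependent_one_tmul (S := S)
      (linearIndependent_pair_one_of_notMem_range_algebraMap hb) using 1
    ext i; fin_cases i <;> rfl
  refine hli.eq_of_pair ?_
  simpa only [smul_tmul', smul_eq_mul, mul_one] using h

set_option synthInstance.maxHeartbeats 1000000 in
theorem stmt_3 {k : Type*} [Field k] [CharP k 2]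
    (a : AlgebraicClosure k)
    (ha : a ∉ Set.range (algebraMap k (AlgebraicClosure k)))
    (ha2 : a ^ 2 ∈ Set.range (algebraMap k (AlgebraicClosure k)))
    (k' : IntermediateField k (AlgebraicClosure k))
    (hk' : k' = IntermediateField.adjoin k {a})
    (μ : (AlgebraicClosure k) ⊗[k] k' →ₐ[k] AlgebraicClosure k)
    (hμ : ∀ (c : AlgebraicClosure k) (d : k'), μ (c ⊗ₜ d) = c * (d : AlgebraicClosure k))
    (x y : (AlgebraicClosure k) ⊗[k] k')
    (hak' : a ∈ k')
    (hxy : x ^ 2 + (((1 : AlgebraicClosure k) ⊗ₜ[k] (⟨a, hak'⟩ : k') : (AlgebraicClosure k) ⊗[k] k')) * y ^ 2 = 1) :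
    μ x = 1 ∧ μ y = 0 := by
  subst hk'
  have : ExpChar (AlgebraicClosure k ⊗[k] k⟮a⟯) 2 :=
    expChar_of_injective_ringHom (algebraMap k _).injective 2
  have hsq := exists_pow_eq_tmul_one (A := AlgebraicClosure k) 2
    (pow_mem_range_algebraMap_of_adjoin_simple 2 ha2)
  obtain ⟨u, hu⟩ := hsq x
  obtain ⟨v, hv⟩ := hsq y
  have hb : (⟨a, hak'⟩ : k⟮a⟯) ∉ Set.range (algebraMap k k⟮a⟯) :=
    fun ⟨r, hr⟩ => ha ⟨r, congrArg Subtype.val hr⟩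
  obtain ⟨rfl, rfl⟩ : u = 1 ∧ v = 0 := by
    refine TensorProduct.eq_of_tmul_one_add_tmul_eq hb ?_
    rw [zero_tmul, add_zero, ← Algebra.TensorProduct.one_def, ← hxy, hu, hv,
      Algebra.TensorProduct.tmul_mul_tmul, one_mul, mul_one]
  have hμsq : ∀ z : AlgebraicClosure k ⊗[k] k⟮a⟯, μ z ^ 2 = μ (z ^ 2) :=
    fun z => (μ.toRingHom.map_pow z 2).symm
  constructor
  · refine frobenius_inj (AlgebraicClosure k) 2 ?_
    rw [frobenius_def, frobenius_def, hμsq, hu, hμ, one_pow, one_mul]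
    rfl
  · rw [← pow_eq_zero_iff two_ne_zero, hμsq, hv, hμ, zero_mul]
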